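/- arXiv:2505.13647 — 3 statements merged into one kernel-verified Lean document; each statement's English description precedes it below -/
import Mathlib

section
/- Let R be a reduced ring. Then for each a ∈ R, P_a = r(l(RaR)) = r(l({a})). -/
open TwoSidedIdeal

/-- Left annihilator of a set: `l(S) = {x | ∀ s ∈ S, x*s = 0}`. -/
def lAnn (R : Type*) [Ring R] (S : Set R) : Set R := {x | ∀ s ∈ S, x * s = 0}

/-- Right annihilator of a set: `r(S) = {x | ∀ s ∈ S, s*x = 0}`. -/
def rAnn (R : Type*) [Ring R] (S : Set R) : Set R := {x | ∀ s ∈ S, s * x = 0}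

/-- A ring is semiprime if `I² = 0` implies `I = 0` for every two-sided ideal `I`. -/
def IsSemiprimeRing (R : Type*) [Ring R] : Prop :=
  ∀ I : TwoSidedIdeal R, (∀ a ∈ I, ∀ b ∈ I, a * b = 0) → I = ⊥

/-- A two-sided ideal `P` is prime if it is proper and `IJ ⊆ P` implies `I ⊆ P` or `J ⊆ P`. -/
def IsPrimeTSI {R : Type*} [Ring R] (P : TwoSidedIdeal R) : Prop :=
  P ≠ ⊤ ∧ ∀ I J : TwoSidedIdeal R, (∀ a ∈ I, ∀ b ∈ J, a * b ∈ P) → I ≤ P ∨ J ≤ P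

/-- A minimal prime ideal: a prime two-sided ideal minimal among primes. -/
def IsMinPrime {R : Type*} [Ring R] (P : TwoSidedIdeal R) : Prop :=
  IsPrimeTSI P ∧ ∀ Q : TwoSidedIdeal R, IsPrimeTSI Q → Q ≤ P → Q = P

/-- `Pmin R B` is the intersection of all minimal prime ideals of `R` containing the set `B`
(equal to all of `R` if there are none). -/
def Pmin (R : Type*) [Ring R] (B : Set R) : Set R :=
  ⋂ P ∈ {P : TwoSidedIdeal R | IsMinPrime P ∧ B ⊆ (P : Set R)}, (P : Set R)

/-- `Pa a` : the intersection of all minimal prime ideals containing `a`. -/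
def Pa {R : Type*} [Ring R] (a : R) : Set R := Pmin R {a}

/-- An ideal `I` is a z°-ideal if `P_a ⊆ I` for every `a ∈ I`. -/
def IsZoIdeal {R : Type*} [Ring R] (I : TwoSidedIdeal R) : Prop :=
  ∀ a ∈ I, Pa a ⊆ (I : Set R)

/-- An ideal `I` is a right d-ideal if `r(l(RaR)) ⊆ I` for every `a ∈ I`. -/
def IsRightDIdeal {R : Type*} [Ring R] (I : TwoSidedIdeal R) : Prop :=
  ∀ a ∈ I, rAnn R (lAnn R (span {a} : Set R)) ⊆ (I : Set R)

/-- An ideal `I` is a right annihilator ideal if `I = r(l(I))`. -/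
def IsRightAnnIdeal {R : Type*} [Ring R] (I : TwoSidedIdeal R) : Prop :=
  (I : Set R) = rAnn R (lAnn R (I : Set R))

section Red
variable {R : Type*} [Ring R]

lemma red_sq (hR : IsReduced R) {x : R} (h : x * x = 0) : x = 0 :=
  hR.eq_zero x ⟨2, by rwa [pow_two]⟩

lemma red_cube (hR : IsReduced R) {x : R} (h : x * (x * x) = 0) : x = 0 :=
  hR.eq_zero x ⟨3, by rwa [pow_succ, pow_two, mul_assoc]⟩

lemma red_rev (hR : IsReduced R) {x y : R} (h : x * y = 0) : y * x = 0 := by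
  apply red_sq hR
  have e : (y * x) * (y * x) = y * ((x * y) * x) := by noncomm_ring
  rw [e, h, zero_mul, mul_zero]

lemma red_ins (hR : IsReduced R) {x y : R} (h : x * y = 0) (r : R) : x * (r * y) = 0 := by
  have h2 := red_rev hR h
  apply red_sq hR
  have e : (x * (r * y)) * (x * (r * y)) = x * (r * ((y * x) * (r * y))) := by noncomm_ring
  rw [e, h2, zero_mul, mul_zero, mul_zero]

lemma red_pow (hR : IsReduced R) : ∀ (k : ℕ) {x y : R}, x ^ (k + 1) * y = 0 → x * y = 0 := by
  intro k
  induction k with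
  | zero => intro x y h; rwa [pow_one] at h
  | succ k ih =>
    intro x y h
    rw [pow_succ, mul_assoc] at h
    have h2 : x ^ (k + 1) * (y * (x * y)) = 0 := red_ins hR h y
    have h3 : x * (y * (x * y)) = 0 := ih h2
    apply red_sq hR
    rw [show (x * y) * (x * y) = x * (y * (x * y)) by noncomm_ring, h3]

lemma red_swap (hR : IsReduced R) {p a b q : R} (h : p * (a * (b * q)) = 0) :
    p * (b * (a * q)) = 0 := by
  set u := p * (b * (a * q)) with hu
  have h1 : (p * (a * b)) * (q * u) = 0 := by
    rw [show (p * (a * b)) * (q * u) = (p * (a * (b * q))) * u by noncomm_ring, h, zero_mul]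
  have h2 : (p * (a * b)) * (a * (q * u)) = 0 := red_ins hR h1 a
  have h3 : (p * a) * (b * (a * (q * u))) = 0 := by
    rw [show (p * a) * (b * (a * (q * u))) = (p * (a * b)) * (a * (q * u)) by noncomm_ring, h2]
  have h4 : (p * a) * ((q * p) * (b * (a * (q * u)))) = 0 := red_ins hR h3 (q * p)
  have h5 : p * (a * ((q * p) * (b * (a * (q * u))))) = 0 := by
    rw [show p * (a * ((q * p) * (b * (a * (q * u))))) =
        (p * a) * ((q * p) * (b * (a * (q * u)))) by noncomm_ring, h4]
  have h6 : p * (b * (a * ((q * p) * (b * (a * (q * u)))))) = 0 := red_ins hR h5 b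
  apply red_cube hR
  rw [show u * (u * u) = p * (b * (a * ((q * p) * (b * (a * (q * u)))))) by rw [hu]; noncomm_ring,
    h6]

lemma red_movePow (hR : IsReduced R) :
    ∀ (k : ℕ) (p m q x : R), p * (m * (x ^ k * q)) = 0 → p * (x ^ k * (m * q)) = 0 := by
  intro k
  induction k with
  | zero => intro p m q x h; rw [pow_zero, one_mul]; rwa [pow_zero, one_mul] at h
  | succ k ih =>
    intro p m q x h
    rw [pow_succ'] at h ⊢
    rw [mul_assoc] at h
    have h2 := red_swap hR h
    have h3 : (p * x) * (m * (x ^ k * q)) = 0 := by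
      rw [show (p * x) * (m * (x ^ k * q)) = p * (x * (m * (x ^ k * q))) by noncomm_ring, h2]
    have h4 := ih (p * x) m q x h3
    rw [show p * (x * x ^ k * (m * q)) = (p * x) * (x ^ k * (m * q)) by noncomm_ring, h4]

end Red
section Prime
variable {R : Type*} [Ring R]

/-- The right annihilator of an element is a two-sided ideal in a reduced ring. -/
def idealRAnn (hR : IsReduced R) (x : R) : TwoSidedIdeal R :=
  TwoSidedIdeal.mk' {t | x * t = 0}
    (by simp)
    (fun {s t} hs ht => by simp only [Set.mem_setOf_eq] at *; rw [mul_add, hs, ht, add_zero])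
    (fun {t} ht => by simp only [Set.mem_setOf_eq] at *; rw [mul_neg, ht, neg_zero])
    (fun {r t} ht => red_ins hR ht r)
    (fun {t r} ht => by simp only [Set.mem_setOf_eq] at *; rw [← mul_assoc, ht, zero_mul])

lemma mem_idealRAnn (hR : IsReduced R) (x t : R) : t ∈ idealRAnn hR x ↔ x * t = 0 :=
  TwoSidedIdeal.mem_mk' _ _ _ _ _ _ t

/-- `{b | ∀ z, u * (z * b) ∈ P}` is a two-sided ideal. -/
def idealCondR (P : TwoSidedIdeal R) (u : R) : TwoSidedIdeal R :=
  TwoSidedIdeal.mk' {b | ∀ z, u * (z * b) ∈ P}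
    (fun z => by rw [mul_zero, mul_zero]; exact P.zero_mem)
    (fun {s t} hs ht z => by
      rw [show u * (z * (s + t)) = u * (z * s) + u * (z * t) by noncomm_ring]
      exact P.add_mem (hs z) (ht z))
    (fun {t} ht z => by
      rw [show u * (z * -t) = -(u * (z * t)) by noncomm_ring]
      exact P.neg_mem (ht z))
    (fun {r t} ht z => by
      rw [show u * (z * (r * t)) = u * ((z * r) * t) by noncomm_ring]
      exact ht (z * r))
    (fun {t r} ht z => by
      rw [show u * (z * (t * r)) = (u * (z * t)) * r by noncomm_ring]
      exact P.mul_mem_right _ _ (ht z))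

lemma mem_idealCondR {P : TwoSidedIdeal R} {u : R} (b : R) :
    b ∈ idealCondR P u ↔ ∀ z, u * (z * b) ∈ P :=
  TwoSidedIdeal.mem_mk' _ _ _ _ _ _ b

/-- `{t | ∀ b ∈ S, t * b ∈ P}` is a two-sided ideal. -/
def idealCondL (P S : TwoSidedIdeal R) : TwoSidedIdeal R :=
  TwoSidedIdeal.mk' {t | ∀ b ∈ S, t * b ∈ P}
    (fun b _ => by rw [zero_mul]; exact P.zero_mem)
    (fun {s t} hs ht b hb => by rw [add_mul]; exact P.add_mem (hs b hb) (ht b hb))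
    (fun {t} ht b hb => by rw [neg_mul]; exact P.neg_mem (ht b hb))
    (fun {r t} ht b hb => by rw [mul_assoc]; exact P.mul_mem_left _ _ (ht b hb))
    (fun {t r} ht b hb => by
      rw [mul_assoc]
      exact ht (r * b) (S.mul_mem_left _ _ hb))

lemma mem_idealCondL {P S : TwoSidedIdeal R} (t : R) :
    t ∈ idealCondL P S ↔ ∀ b ∈ S, t * b ∈ P :=
  TwoSidedIdeal.mem_mk' _ _ _ _ _ _ t

/-- Element-wise primeness. -/
lemma prime_elt {P : TwoSidedIdeal R} (hP : IsPrimeTSI P) {u v : R}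
    (h : ∀ r, u * (r * v) ∈ P) : u ∈ P ∨ v ∈ P := by
  have hv : ∀ b ∈ TwoSidedIdeal.span {v}, ∀ z, u * (z * b) ∈ P := by
    intro b hb
    refine (mem_idealCondR b).1 (TwoSidedIdeal.mem_span_iff.1 hb (idealCondR P u) ?_)
    intro t ht
    rcases ht with rfl
    exact SetLike.mem_coe.2 ((mem_idealCondR t).2 h)
  have hIJ : ∀ a ∈ TwoSidedIdeal.span {u}, ∀ b ∈ TwoSidedIdeal.span {v}, a * b ∈ P := by
    intro a ha
    refine (mem_idealCondL a).1
      (TwoSidedIdeal.mem_span_iff.1 ha (idealCondL P (TwoSidedIdeal.span {v})) ?_)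
    intro t ht
    rcases ht with rfl
    refine SetLike.mem_coe.2 ((mem_idealCondL t).2 ?_)
    intro b hb
    have := hv b hb 1
    rwa [one_mul] at this
  rcases hP.2 _ _ hIJ with h1 | h1
  · exact Or.inl (h1 (TwoSidedIdeal.subset_span rfl))
  · exact Or.inr (h1 (TwoSidedIdeal.subset_span rfl))

lemma prime_mul_zero (hR : IsReduced R) {P : TwoSidedIdeal R} (hP : IsPrimeTSI P) {u v : R}
    (h : u * v = 0) : u ∈ P ∨ v ∈ P :=
  prime_elt hP (fun r => by rw [red_ins hR h r]; exact P.zero_mem)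

end Prime
section MaxMonoid
variable {R : Type*} [Ring R]

/-- For a submonoid `M`, `{x | ∃ s ∈ M, x * s = 0}` is a two-sided ideal (reduced ring). -/
def QId (hR : IsReduced R) (M : Submonoid R) : TwoSidedIdeal R :=
  TwoSidedIdeal.mk' {x | ∃ s ∈ M, x * s = 0}
    (⟨1, M.one_mem, by rw [zero_mul]⟩)
    (fun {x y} hx hy => by
      obtain ⟨s, hs, hxs⟩ := hx
      obtain ⟨t, ht, hyt⟩ := hy
      refine ⟨s * t, M.mul_mem hs ht, ?_⟩
      have h1 : x * (s * t) = 0 := by rw [← mul_assoc, hxs, zero_mul]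
      rw [add_mul, h1, red_ins hR hyt s, add_zero])
    (fun {x} hx => by
      obtain ⟨s, hs, hxs⟩ := hx
      exact ⟨s, hs, by rw [neg_mul, hxs, neg_zero]⟩)
    (fun {r x} hx => by
      obtain ⟨s, hs, hxs⟩ := hx
      exact ⟨s, hs, by rw [mul_assoc, hxs, mul_zero]⟩)
    (fun {x r} hx => by
      obtain ⟨s, hs, hxs⟩ := hx
      refine ⟨s, hs, ?_⟩
      have h1 : s * x = 0 := red_rev hR hxs
      have h2 : s * (x * r) = 0 := by rw [← mul_assoc, h1, zero_mul]
      exact red_rev hR h2)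

lemma mem_QId (hR : IsReduced R) {M : Submonoid R} (x : R) :
    x ∈ QId hR M ↔ ∃ s ∈ M, x * s = 0 :=
  TwoSidedIdeal.mem_mk' _ _ _ _ _ _ x

lemma QId_disjoint (hR : IsReduced R) {M : Submonoid R} (h0 : (0 : R) ∉ M) {x : R}
    (hx : x ∈ QId hR M) (hxM : x ∈ M) : False := by
  obtain ⟨s, hs, hxs⟩ := (mem_QId hR x).1 hx
  exact h0 (hxs ▸ M.mul_mem hxM hs)

/-- If `M` is a maximal submonoid avoiding `0` and `i * m ≠ 0` for all `m ∈ M`, then `i ∈ M`. -/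
lemma mem_max_monoid (hR : IsReduced R) {M : Submonoid R} (h0 : (0 : R) ∉ M)
    (hmax : ∀ N : Submonoid R, M ≤ N → (0 : R) ∉ N → N ≤ M) {i : R}
    (hi : i ∉ QId hR M) : i ∈ M := by
  set N := Submonoid.closure ((M : Set R) ∪ {i}) with hN
  have hMN : M ≤ N := fun x hx => Submonoid.subset_closure (Or.inl hx)
  have h0N : (0 : R) ∉ N := by
    intro h0mem
    have key : ∀ n ∈ N, ∃ k : ℕ, ∃ m ∈ M, ∀ z w : R,
        z * (n * w) = 0 → z * (i ^ k * (m * w)) = 0 := by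
      intro n hn
      induction hn using Submonoid.closure_induction with
      | mem y hy =>
        rcases hy with hy | hy
        · exact ⟨0, y, hy, fun z w h => by
            rw [pow_zero, one_mul]; exact h⟩
        · rcases hy with rfl
          exact ⟨1, 1, M.one_mem, fun z w h => by
            rw [pow_one, one_mul]; exact h⟩
      | one =>
        exact ⟨0, 1, M.one_mem, fun z w h => by
          rw [pow_zero, one_mul, one_mul]; rwa [one_mul] at h⟩
      | mul n₁ n₂ hn₁ hn₂ ih₁ ih₂ =>
        obtain ⟨k₁, m₁, hm₁, f₁⟩ := ih₁
        obtain ⟨k₂, m₂, hm₂, f₂⟩ := ih₂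
        refine ⟨k₁ + k₂, m₁ * m₂, M.mul_mem hm₁ hm₂, ?_⟩
        intro z w h
        have e1 : z * (n₁ * (n₂ * w)) = 0 := by
          rw [show z * (n₁ * (n₂ * w)) = z * (n₁ * n₂ * w) by noncomm_ring, h]
        have e2 := f₁ z (n₂ * w) e1
        have e3 : (z * (i ^ k₁ * m₁)) * (n₂ * w) = 0 := by
          rw [show (z * (i ^ k₁ * m₁)) * (n₂ * w) = z * (i ^ k₁ * (m₁ * (n₂ * w)))
            by noncomm_ring, e2]
        have e4 := f₂ (z * (i ^ k₁ * m₁)) w e3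
        have e5 : (z * i ^ k₁) * (m₁ * (i ^ k₂ * (m₂ * w))) = 0 := by
          rw [show (z * i ^ k₁) * (m₁ * (i ^ k₂ * (m₂ * w))) =
            (z * (i ^ k₁ * m₁)) * (i ^ k₂ * (m₂ * w)) by noncomm_ring, e4]
        have e6 := red_movePow hR k₂ (z * i ^ k₁) m₁ (m₂ * w) i e5
        rw [pow_add]
        rw [show z * (i ^ k₁ * i ^ k₂ * (m₁ * m₂ * w)) =
          (z * i ^ k₁) * (i ^ k₂ * (m₁ * (m₂ * w))) by noncomm_ring]
        exact e6
    obtain ⟨k, m, hm, hf⟩ := key 0 h0mem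
    have h1 : (1 : R) * ((0 : R) * (1 : R)) = 0 := by rw [zero_mul, mul_zero]
    have h2 := hf 1 1 h1
    rw [one_mul, mul_one] at h2
    rcases k with _ | k
    · rw [pow_zero, one_mul] at h2
      exact h0 (h2 ▸ hm)
    · have h3 : i * m = 0 := red_pow hR k h2
      exact hi ((mem_QId hR i).2 ⟨m, hm, h3⟩)
  exact hmax N hMN h0N (Submonoid.subset_closure (Or.inr rfl))

/-- The ideal associated with a maximal `0`-avoiding submonoid is prime. -/
lemma QId_prime (hR : IsReduced R) {M : Submonoid R} (h0 : (0 : R) ∉ M)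
    (hmax : ∀ N : Submonoid R, M ≤ N → (0 : R) ∉ N → N ≤ M) :
    IsPrimeTSI (QId hR M) := by
  constructor
  · intro htop
    have h1 : (1 : R) ∈ QId hR M := (TwoSidedIdeal.one_mem_iff _).2 htop
    obtain ⟨s, hs, hss⟩ := (mem_QId hR 1).1 h1
    rw [one_mul] at hss
    exact h0 (hss ▸ hs)
  · intro I J hIJ
    by_contra hc
    push_neg at hc
    obtain ⟨hI, hJ⟩ := hc
    rw [TwoSidedIdeal.le_iff, Set.not_subset] at hI hJ
    obtain ⟨i, hiI, hiQ⟩ := hI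
    obtain ⟨j, hjJ, hjQ⟩ := hJ
    have hiM : i ∈ M := mem_max_monoid hR h0 hmax (by simpa using hiQ)
    have hij : i * j ∈ QId hR M := hIJ i (by simpa using hiI) j (by simpa using hjJ)
    obtain ⟨s, hs, hijs⟩ := (mem_QId hR (i * j)).1 hij
    have e1 : i * (j * s) = 0 := by rwa [← mul_assoc]
    have e2 : (j * s) * i = 0 := red_rev hR e1
    have e3 : j * (s * i) = 0 := by rwa [mul_assoc] at e2
    exact hjQ (SetLike.mem_coe.2 ((mem_QId hR j).2 ⟨s * i, M.mul_mem hs hiM, e3⟩))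

/-- Zorn: any `0`-avoiding submonoid extends to a maximal one. -/
lemma exists_max_monoid (M₀ : Submonoid R) (h0 : (0 : R) ∉ M₀) :
    ∃ M : Submonoid R, M₀ ≤ M ∧ (0 : R) ∉ M ∧
      ∀ N : Submonoid R, M ≤ N → (0 : R) ∉ N → N ≤ M := by
  obtain ⟨M, hM₀M, hM⟩ := zorn_le_nonempty₀ {M : Submonoid R | (0 : R) ∉ M}
    (fun c hcs hchain y hy => by
      refine ⟨sSup c, ?_, fun z hz => le_sSup hz⟩
      intro h0mem
      rw [Submonoid.mem_sSup_of_directedOn ⟨y, hy⟩ hchain.directedOn] at h0mem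
      obtain ⟨N, hNc, h0N⟩ := h0mem
      exact hcs hNc h0N) M₀ h0
  exact ⟨M, hM₀M, hM.1, fun N hMN h0N => hM.2 h0N hMN⟩

end MaxMonoid
section MinPrime
variable {R : Type*} [Ring R]

lemma sInf_chain_prime {S : Set (TwoSidedIdeal R)} (hne : S.Nonempty)
    (hchain : IsChain (· ≤ ·) S) (hprime : ∀ Q ∈ S, IsPrimeTSI Q) :
    IsPrimeTSI (sInf S) := by
  constructor
  · intro htop
    obtain ⟨Q, hQ⟩ := hne
    have : Q = ⊤ := top_le_iff.1 (htop ▸ sInf_le hQ)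
    exact (hprime Q hQ).1 this
  · intro I J h
    by_contra hc
    push_neg at hc
    obtain ⟨hI, hJ⟩ := hc
    rw [le_sInf_iff] at hI hJ
    push_neg at hI hJ
    obtain ⟨Q₁, hQ₁S, hIQ₁⟩ := hI
    obtain ⟨Q₂, hQ₂S, hJQ₂⟩ := hJ
    have hsub : ∀ Q ∈ S, ∀ a ∈ I, ∀ b ∈ J, a * b ∈ Q := by
      intro Q hQ a ha b hb
      exact (TwoSidedIdeal.mem_sInf R).1 (h a ha b hb) Q hQ
    rcases hchain.total hQ₁S hQ₂S with hle | hle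
    · rcases (hprime Q₁ hQ₁S).2 I J (hsub Q₁ hQ₁S) with h1 | h1
      · exact hIQ₁ h1
      · exact hJQ₂ (h1.trans hle)
    · rcases (hprime Q₂ hQ₂S).2 I J (hsub Q₂ hQ₂S) with h1 | h1
      · exact hIQ₁ (h1.trans hle)
      · exact hJQ₂ h1

/-- Every prime contains a minimal prime. -/
lemma exists_minPrime_le (P : TwoSidedIdeal R) (hP : IsPrimeTSI P) :
    ∃ Q, IsMinPrime Q ∧ Q ≤ P := by
  obtain ⟨m, hm1, hm2⟩ := zorn_le_nonempty₀
    {Q : (TwoSidedIdeal R)ᵒᵈ | IsPrimeTSI (OrderDual.ofDual Q) ∧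
      OrderDual.ofDual Q ≤ P}
    (fun c hcs hchain y hy => by
      set S : Set (TwoSidedIdeal R) := OrderDual.ofDual '' c with hS
      have hSne : S.Nonempty := ⟨OrderDual.ofDual y, y, hy, rfl⟩
      have hSchain : IsChain (· ≤ ·) S := by
        rintro _ ⟨p, hp, rfl⟩ _ ⟨q, hq, rfl⟩ hne
        rcases hchain hp hq (fun e => hne (congrArg OrderDual.ofDual e)) with h | h
        · exact Or.inr h
        · exact Or.inl h
      have hSprime : ∀ Q ∈ S, IsPrimeTSI Q := by
        rintro _ ⟨p, hp, rfl⟩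
        exact (hcs hp).1
      refine ⟨OrderDual.toDual (sInf S), ?_, ?_⟩
      · simp only [Set.mem_setOf_eq]
        refine ⟨sInf_chain_prime hSne hSchain hSprime, ?_⟩
        obtain ⟨q, hq⟩ := hSne
        obtain ⟨p, hp, rfl⟩ := hq
        have hqs := hcs hp
        rw [Set.mem_setOf_eq] at hqs
        exact (sInf_le (Set.mem_image_of_mem _ hp)).trans hqs.2
      · intro z hz
        show sInf S ≤ OrderDual.ofDual z
        exact sInf_le (Set.mem_image_of_mem _ hz))
    (OrderDual.toDual P) ⟨hP, le_rfl⟩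
  refine ⟨OrderDual.ofDual m, ⟨hm2.1.1, ?_⟩, hm2.1.2⟩
  intro Q hQ hQle
  have : m ≤ OrderDual.toDual Q := hQle
  have h2 := hm2.2 ⟨hQ, hQle.trans hm2.1.2⟩ this
  exact le_antisymm hQle h2

/-- In a reduced ring every nonzero element avoids some minimal prime. -/
lemma exists_minPrime_avoid (hR : IsReduced R) {x : R} (hx : x ≠ 0) :
    ∃ P : TwoSidedIdeal R, IsMinPrime P ∧ x ∉ P := by
  have h0 : (0 : R) ∉ Submonoid.powers x := by
    rintro ⟨n, hn⟩
    exact hx (hR.eq_zero x ⟨n, hn.symm ▸ rfl⟩)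
  obtain ⟨M, hM₀M, h0M, hmax⟩ := exists_max_monoid (Submonoid.powers x) h0
  have hq := QId_prime hR h0M hmax
  obtain ⟨P, hPmin, hPle⟩ := exists_minPrime_le _ hq
  refine ⟨P, hPmin, fun hxP => ?_⟩
  have hxQ : x ∈ QId hR M := hPle hxP
  exact QId_disjoint hR h0M hxQ (hM₀M ⟨1, pow_one x⟩)

/-- In a reduced ring, every element of a minimal prime is annihilated by an element
outside the prime. -/
lemma minPrime_ann (hR : IsReduced R) {P : TwoSidedIdeal R} (hP : IsMinPrime P) {a : R}
    (ha : a ∈ P) : ∃ s, s ∉ P ∧ s * a = 0 := by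
  classical
  have h1P : (1 : R) ∉ P := fun h => hP.1.1 ((TwoSidedIdeal.one_mem_iff _).1 h)
  set M₀ := Submonoid.closure ((P : Set R)ᶜ) with hM₀
  have h0 : (0 : R) ∉ M₀ := by
    intro h0mem
    have key : ∀ n ∈ M₀, ∃ u, u ∉ P ∧ ∀ z w : R, z * (n * w) = 0 → z * (u * w) = 0 := by
      intro n hn
      induction hn using Submonoid.closure_induction with
      | mem y hy => exact ⟨y, hy, fun z w h => h⟩
      | one => exact ⟨1, h1P, fun z w h => h⟩
      | mul n₁ n₂ hn₁ hn₂ ih₁ ih₂ =>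
        obtain ⟨u₁, hu₁, f₁⟩ := ih₁
        obtain ⟨u₂, hu₂, f₂⟩ := ih₂
        have hr : ¬ ∀ r, u₁ * (r * u₂) ∈ P := by
          intro hall
          rcases prime_elt hP.1 hall with h | h
          · exact hu₁ h
          · exact hu₂ h
        push_neg at hr
        obtain ⟨r, hrP⟩ := hr
        refine ⟨u₁ * (r * u₂), hrP, ?_⟩
        intro z w h
        have e1 : z * (n₁ * (n₂ * w)) = 0 := by
          rw [show z * (n₁ * (n₂ * w)) = z * (n₁ * n₂ * w) by noncomm_ring, h]
        have e2 := f₁ z (n₂ * w) e1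
        have e3 : (z * u₁) * (n₂ * w) = 0 := by
          rw [show (z * u₁) * (n₂ * w) = z * (u₁ * (n₂ * w)) by noncomm_ring, e2]
        have e4 := f₂ (z * u₁) w e3
        have e5 : (z * u₁) * (u₂ * w) = 0 := e4
        have e6 := red_ins hR e5 r
        rw [show z * (u₁ * (r * u₂) * w) = (z * u₁) * (r * (u₂ * w)) by noncomm_ring]
        exact e6
    obtain ⟨u, huP, hf⟩ := key 0 h0mem
    have h1 : (1 : R) * ((0 : R) * (1 : R)) = 0 := by rw [zero_mul, mul_zero]
    have h2 := hf 1 1 h1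
    rw [one_mul, mul_one] at h2
    exact huP (h2 ▸ P.zero_mem)
  obtain ⟨M, hM₀M, h0M, hmax⟩ := exists_max_monoid M₀ h0
  have hq := QId_prime hR h0M hmax
  have hQP : QId hR M ≤ P := by
    intro q hq'
    by_contra hqP
    exact QId_disjoint hR h0M hq' (hM₀M (Submonoid.subset_closure hqP))
  have hQeq : QId hR M = P := hP.2 _ hq hQP
  obtain ⟨s, hsM, hsa⟩ := (mem_QId hR a).1 (hQeq ▸ ha)
  refine ⟨s, ?_, red_rev hR hsa⟩
  intro hsP
  exact QId_disjoint hR h0M (hQeq ▸ hsP) hsM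

end MinPrime
section Main
variable {R : Type*} [Ring R]

lemma mem_Pa {a x : R} : x ∈ Pa a ↔ ∀ P : TwoSidedIdeal R, IsMinPrime P → a ∈ P → x ∈ P := by
  rw [Pa, Pmin, Set.mem_iInter₂]
  constructor
  · intro h P hP haP
    exact SetLike.mem_coe.1 (h P ⟨hP, Set.singleton_subset_iff.2 haP⟩)
  · intro h P hP
    rw [Set.mem_setOf_eq] at hP
    exact SetLike.mem_coe.2 (h P hP.1 (hP.2 rfl))

lemma lAnn_span (hR : IsReduced R) (a : R) :
    lAnn R ((TwoSidedIdeal.span {a} : TwoSidedIdeal R) : Set R) = lAnn R {a} := by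
  ext y
  simp only [lAnn, Set.mem_setOf_eq]
  constructor
  · intro h s hs
    rcases hs with rfl
    exact h s (TwoSidedIdeal.subset_span rfl)
  · intro h s hs
    have hy : y * a = 0 := h a rfl
    have hmem : s ∈ idealRAnn hR y :=
      TwoSidedIdeal.mem_span_iff.1 (SetLike.mem_coe.1 hs) (idealRAnn hR y) (by
        intro t ht
        rcases ht with rfl
        exact SetLike.mem_coe.2 ((mem_idealRAnn hR y t).2 hy))
    exact (mem_idealRAnn hR y s).1 hmem

end Main

/-- Corollary 3.4(1): in a reduced ring, `P_a = r(l(RaR)) = r(l({a}))` for each `a`. -/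
theorem stmt2 (R : Type*) [Ring R] (hR : IsReduced R) (a : R) :
    Pa a = rAnn R (lAnn R (span {a} : Set R)) ∧
      rAnn R (lAnn R (span {a} : Set R)) = rAnn R (lAnn R {a}) := by
  have hl : lAnn R ((TwoSidedIdeal.span {a} : TwoSidedIdeal R) : Set R) = lAnn R {a} :=
    lAnn_span hR a
  constructor
  · ext x
    constructor
    · intro hx
      simp only [rAnn, Set.mem_setOf_eq, hl]
      intro y hy
      have hya : y * a = 0 := hy a rfl
      by_contra hne
      obtain ⟨P₀, hmin, hnx⟩ := exists_minPrime_avoid hR hne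
      apply hnx
      by_cases haP : a ∈ P₀
      · exact P₀.mul_mem_left y x (mem_Pa.1 hx P₀ hmin haP)
      · rcases prime_elt hmin.1 (u := y) (v := a)
          (fun r => by rw [red_ins hR hya r]; exact P₀.zero_mem) with h | h
        · exact P₀.mul_mem_right _ _ h
        · exact absurd h haP
    · intro hx
      rw [mem_Pa]
      intro P hmin haP
      obtain ⟨s, hsP, hsa⟩ := minPrime_ann hR hmin haP
      have hsl : s ∈ lAnn R ((TwoSidedIdeal.span {a} : TwoSidedIdeal R) : Set R) := by
        rw [hl]
        intro t ht
        rcases ht with rfl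
        exact hsa
      have hsx : s * x = 0 := hx s hsl
      rcases prime_elt hmin.1 (u := s) (v := x)
        (fun r => by rw [red_ins hR hsx r]; exact P.zero_mem) with h | h
      · exact absurd h hsP
      · exact h
  · rw [hl]
end

section
/- Let S and R be rings, M an (S,R)-bimodule, and T the generalized 2-by-2 upper triangular matrix ring with underlying set {(s, m, r) : s ∈ S, m ∈ M, r ∈ R} (thought of as matrices [[s, m],[0, r]]), with componentwise addition and multiplication (s, m, r)(s', m', r') = (ss', s·m' + m·r', rr'). Let J = {(s, m, r) ∈ T : s ∈ I, m ∈ N, r ∈ L} be an ideal of T, where I is an ideal of S, L is an ideal of R, and N is an (S,R)-subbimodule of M with I·M ⊆ N and M·L ⊆ N. Then J is a z°-ideal of T if and only if N = M and I is a z°-ideal of S and L is a z°-ideal of R. -/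
set_option linter.unusedSectionVars false


open TwoSidedIdeal MulOpposite

/-- The generalized 2-by-2 upper triangular matrix ring `[[S, M], [0, R]]`, realized on
the underlying set `S × M × R`. -/
abbrev Tri (S M R : Type*) := S × M × R

section TriRing

variable {S M R : Type*} [Ring S] [Ring R] [AddCommGroup M]
  [Module S M] [Module Rᵐᵒᵖ M] [SMulCommClass S Rᵐᵒᵖ M]

instance : Ring (Tri S M R) :=
  { (inferInstance : AddCommGroup (S × M × R)) with
    mul := fun x y => (x.1 * y.1, x.1 • y.2.1 + op y.2.2 • x.2.1, x.2.2 * y.2.2)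
    one := (1, 0, 1)
    mul_assoc := fun x y z => by
      refine Prod.ext (mul_assoc _ _ _) (Prod.ext ?_ (mul_assoc _ _ _))
      show (x.1 * y.1) • z.2.1 + op z.2.2 • (x.1 • y.2.1 + op y.2.2 • x.2.1) =
        x.1 • (y.1 • z.2.1 + op z.2.2 • y.2.1) + op (y.2.2 * z.2.2) • x.2.1
      rw [mul_smul, smul_add, smul_add, ← smul_comm x.1 (op z.2.2) y.2.1, op_mul, mul_smul,
        add_assoc]
    one_mul := fun x => by
      refine Prod.ext (one_mul _) (Prod.ext ?_ (one_mul _))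
      show (1 : S) • x.2.1 + op x.2.2 • (0 : M) = x.2.1
      rw [one_smul, smul_zero, add_zero]
    mul_one := fun x => by
      refine Prod.ext (mul_one _) (Prod.ext ?_ (mul_one _))
      show x.1 • (0 : M) + op (1 : R) • x.2.1 = x.2.1
      rw [smul_zero, op_one, one_smul, zero_add]
    left_distrib := fun x y z => by
      refine Prod.ext (mul_add _ _ _) (Prod.ext ?_ (mul_add _ _ _))
      show x.1 • (y.2.1 + z.2.1) + op (y.2.2 + z.2.2) • x.2.1 =
        (x.1 • y.2.1 + op y.2.2 • x.2.1) + (x.1 • z.2.1 + op z.2.2 • x.2.1)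
      rw [smul_add, op_add, add_smul]
      abel
    right_distrib := fun x y z => by
      refine Prod.ext (add_mul _ _ _) (Prod.ext ?_ (add_mul _ _ _))
      show (x.1 + y.1) • z.2.1 + op z.2.2 • (x.2.1 + y.2.1) =
        (x.1 • z.2.1 + op z.2.2 • x.2.1) + (y.1 • z.2.1 + op z.2.2 • y.2.1)
      rw [add_smul, smul_add]
      abel
    zero_mul := fun x => by
      refine Prod.ext (zero_mul _) (Prod.ext ?_ (zero_mul _))
      show (0 : S) • x.2.1 + op x.2.2 • (0 : M) = 0
      rw [zero_smul, smul_zero, add_zero]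
    mul_zero := fun x => by
      refine Prod.ext (mul_zero _) (Prod.ext ?_ (mul_zero _))
      show x.1 • (0 : M) + op (0 : R) • x.2.1 = 0
      rw [smul_zero, op_zero, zero_smul, add_zero] }

end TriRing


section Aux

variable {S M R : Type*} [Ring S] [Ring R] [AddCommGroup M]
  [Module S M] [Module Rᵐᵒᵖ M] [SMulCommClass S Rᵐᵒᵖ M]

lemma tri_mul_fst (x y : Tri S M R) : (x * y).1 = x.1 * y.1 := rfl
lemma tri_mul_thd (x y : Tri S M R) : (x * y).2.2 = x.2.2 * y.2.2 := rfl

/-- Embedding of `S` into the corner of `Tri S M R`. -/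
def embS (s : S) : Tri S M R := (s, 0, 0)

/-- Embedding of `R` into the corner of `Tri S M R`. -/
def embR (r : R) : Tri S M R := (0, 0, r)

lemma embS_fst (s : S) : (embS (M := M) (R := R) s).1 = s := rfl
lemma embR_thd (r : R) : (embR (S := S) (M := M) r).2.2 = r := rfl

lemma mul_e1 (x : Tri S M R) : x * embS 1 = embS x.1 := by
  refine Prod.ext ?_ (Prod.ext ?_ ?_)
  · show x.1 * 1 = x.1; rw [mul_one]
  · show x.1 • (0 : M) + op (0 : R) • x.2.1 = 0
    rw [smul_zero, op_zero, zero_smul, add_zero]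
  · show x.2.2 * 0 = 0; rw [mul_zero]

lemma e3_mul (x : Tri S M R) : embR 1 * x = embR x.2.2 := by
  refine Prod.ext ?_ (Prod.ext ?_ ?_)
  · show (0 : S) * x.1 = 0; rw [zero_mul]
  · show (0 : S) • x.2.1 + op x.2.2 • (0 : M) = 0
    rw [zero_smul, smul_zero, add_zero]
  · show (1 : R) * x.2.2 = x.2.2; rw [one_mul]

lemma tri_decomp (x : Tri S M R) : x = embS x.1 + (0, x.2.1, x.2.2) := by
  refine Prod.ext ?_ (Prod.ext ?_ ?_)
  · show x.1 = x.1 + 0; rw [add_zero]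
  · show x.2.1 = 0 + x.2.1; rw [zero_add]
  · show x.2.2 = 0 + x.2.2; rw [zero_add]

lemma tri_decomp' (x : Tri S M R) : x = embR x.2.2 + (x.1, x.2.1, 0) := by
  refine Prod.ext ?_ (Prod.ext ?_ ?_)
  · show x.1 = 0 + x.1; rw [zero_add]
  · show x.2.1 = 0 + x.2.1; rw [zero_add]
  · show x.2.2 = x.2.2 + 0; rw [add_zero]

lemma embS_add (x y : S) : (embS (x + y) : Tri S M R) = embS x + embS y := by
  refine Prod.ext rfl (Prod.ext ?_ ?_)
  · show (0 : M) = 0 + 0; rw [add_zero]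
  · show (0 : R) = 0 + 0; rw [add_zero]

lemma embS_neg (x : S) : (embS (-x) : Tri S M R) = -embS x := by
  refine Prod.ext rfl (Prod.ext ?_ ?_)
  · show (0 : M) = -0; rw [neg_zero]
  · show (0 : R) = -0; rw [neg_zero]

lemma embS_mul (x y : S) : (embS (x * y) : Tri S M R) = embS x * embS y := by
  refine Prod.ext rfl (Prod.ext ?_ ?_)
  · show (0 : M) = x • (0 : M) + op (0 : R) • (0 : M)
    rw [smul_zero, smul_zero, add_zero]
  · show (0 : R) = 0 * 0; rw [mul_zero]

lemma embR_add (x y : R) : (embR (x + y) : Tri S M R) = embR x + embR y := by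
  refine Prod.ext ?_ (Prod.ext ?_ rfl)
  · show (0 : S) = 0 + 0; rw [add_zero]
  · show (0 : M) = 0 + 0; rw [add_zero]

lemma embR_neg (x : R) : (embR (-x) : Tri S M R) = -embR x := by
  refine Prod.ext ?_ (Prod.ext ?_ rfl)
  · show (0 : S) = -0; rw [neg_zero]
  · show (0 : M) = -0; rw [neg_zero]

lemma embR_mul (x y : R) : (embR (x * y) : Tri S M R) = embR x * embR y := by
  refine Prod.ext ?_ (Prod.ext ?_ rfl)
  · show (0 : S) = 0 * 0; rw [mul_zero]
  · show (0 : M) = (0 : S) • (0 : M) + op y • (0 : M)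
    rw [smul_zero, smul_zero, add_zero]

lemma embS_zero : (embS 0 : Tri S M R) = 0 := rfl
lemma embR_zero : (embR 0 : Tri S M R) = 0 := rfl

/-- The lift `[[P, M], [0, R]]` of an ideal `P` of `S`. -/
def liftS (P : TwoSidedIdeal S) : TwoSidedIdeal (Tri S M R) :=
  TwoSidedIdeal.mk' {x | x.1 ∈ P} P.zero_mem
    (fun hx hy => P.add_mem hx hy)
    (fun hx => P.neg_mem hx)
    (fun {x y} hy => P.mul_mem_left x.1 y.1 hy)
    (fun {x y} hx => P.mul_mem_right x.1 y.1 hx)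

/-- The lift `[[S, M], [0, P]]` of an ideal `P` of `R`. -/
def liftR (P : TwoSidedIdeal R) : TwoSidedIdeal (Tri S M R) :=
  TwoSidedIdeal.mk' {x | x.2.2 ∈ P} P.zero_mem
    (fun hx hy => P.add_mem hx hy)
    (fun hx => P.neg_mem hx)
    (fun {x y} hy => P.mul_mem_left x.2.2 y.2.2 hy)
    (fun {x y} hx => P.mul_mem_right x.2.2 y.2.2 hx)

lemma mem_liftS {P : TwoSidedIdeal S} {x : Tri S M R} : x ∈ liftS P ↔ x.1 ∈ P := by
  simp [liftS]

lemma mem_liftR {P : TwoSidedIdeal R} {x : Tri S M R} : x ∈ liftR P ↔ x.2.2 ∈ P := by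
  simp [liftR]

/-- `[[0, M], [0, R]]` as an ideal of `Tri S M R`. -/
def AT : TwoSidedIdeal (Tri S M R) := liftS ⊥

/-- `[[S, M], [0, 0]]` as an ideal of `Tri S M R`. -/
def BT : TwoSidedIdeal (Tri S M R) := liftR ⊥

lemma mem_AT {x : Tri S M R} : x ∈ (AT : TwoSidedIdeal (Tri S M R)) ↔ x.1 = 0 := by
  rw [AT, mem_liftS]; exact TwoSidedIdeal.mem_bot _

lemma mem_BT {x : Tri S M R} : x ∈ (BT : TwoSidedIdeal (Tri S M R)) ↔ x.2.2 = 0 := by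
  rw [BT, mem_liftR]; exact TwoSidedIdeal.mem_bot _

lemma AT_mul_BT {x y : Tri S M R} (hx : x.1 = 0) (hy : y.2.2 = 0) : x * y = 0 := by
  refine Prod.ext ?_ (Prod.ext ?_ ?_)
  · show x.1 * y.1 = 0; rw [hx, zero_mul]
  · show x.1 • y.2.1 + op y.2.2 • x.2.1 = 0
    rw [hx, hy, zero_smul, op_zero, zero_smul, add_zero]
  · show x.2.2 * y.2.2 = 0; rw [hy, mul_zero]

lemma mid_mem_prime {Q : TwoSidedIdeal (Tri S M R)} (hQ : IsPrimeTSI Q) (m : M) :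
    ((0 : S), m, (0 : R)) ∈ Q := by
  have h := hQ.2 AT BT (fun a ha b hb => by
    rw [AT_mul_BT (mem_AT.mp ha) (mem_BT.mp hb)]; exact Q.zero_mem)
  rcases h with h | h
  · exact h (mem_AT.mpr rfl)
  · exact h (mem_BT.mpr rfl)

lemma liftS_prime {P : TwoSidedIdeal S} (hP : IsPrimeTSI P) :
    IsPrimeTSI (liftS (M := M) (R := R) P) := by
  constructor
  · intro h
    refine hP.1 (P.one_mem_iff.mp ?_)
    have : (1 : Tri S M R) ∈ liftS (M := M) (R := R) P := by rw [h]; trivial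
    exact mem_liftS.mp this
  · intro A B hAB
    let projS : TwoSidedIdeal (Tri S M R) → TwoSidedIdeal S := fun C =>
      TwoSidedIdeal.mk' {s | ∃ x ∈ C, x.1 = s}
        ⟨0, C.zero_mem, rfl⟩
        (fun {s t} hs ht => by
          obtain ⟨x, hx, rfl⟩ := hs; obtain ⟨y, hy, rfl⟩ := ht
          exact ⟨x + y, C.add_mem hx hy, rfl⟩)
        (fun {s} hs => by
          obtain ⟨x, hx, rfl⟩ := hs; exact ⟨-x, C.neg_mem hx, rfl⟩)
        (fun {s t} ht => by
          obtain ⟨y, hy, rfl⟩ := ht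
          exact ⟨embS s * y, C.mul_mem_left _ _ hy, rfl⟩)
        (fun {s t} hs => by
          obtain ⟨x, hx, rfl⟩ := hs
          exact ⟨x * embS t, C.mul_mem_right _ _ hx, rfl⟩)
    have hmem : ∀ (C : TwoSidedIdeal (Tri S M R)) (s : S),
        s ∈ projS C ↔ ∃ x ∈ C, x.1 = s := fun C s => by
      simp [projS]
    have h := hP.2 (projS A) (projS B) (fun s hs t ht => by
      obtain ⟨x, hx, rfl⟩ := (hmem A s).mp hs
      obtain ⟨y, hy, rfl⟩ := (hmem B t).mp ht
      exact mem_liftS.mp (hAB x hx y hy))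
    rcases h with h | h
    · exact Or.inl (fun x hx => mem_liftS.mpr (h ((hmem A x.1).mpr ⟨x, hx, rfl⟩)))
    · exact Or.inr (fun x hx => mem_liftS.mpr (h ((hmem B x.1).mpr ⟨x, hx, rfl⟩)))

lemma liftR_prime {P : TwoSidedIdeal R} (hP : IsPrimeTSI P) :
    IsPrimeTSI (liftR (S := S) (M := M) P) := by
  constructor
  · intro h
    refine hP.1 (P.one_mem_iff.mp ?_)
    have : (1 : Tri S M R) ∈ liftR (S := S) (M := M) P := by rw [h]; trivial
    exact mem_liftR.mp this
  · intro A B hAB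
    let projR : TwoSidedIdeal (Tri S M R) → TwoSidedIdeal R := fun C =>
      TwoSidedIdeal.mk' {r | ∃ x ∈ C, x.2.2 = r}
        ⟨0, C.zero_mem, rfl⟩
        (fun {s t} hs ht => by
          obtain ⟨x, hx, rfl⟩ := hs; obtain ⟨y, hy, rfl⟩ := ht
          exact ⟨x + y, C.add_mem hx hy, rfl⟩)
        (fun {s} hs => by
          obtain ⟨x, hx, rfl⟩ := hs; exact ⟨-x, C.neg_mem hx, rfl⟩)
        (fun {s t} ht => by
          obtain ⟨y, hy, rfl⟩ := ht
          exact ⟨embR s * y, C.mul_mem_left _ _ hy, rfl⟩)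
        (fun {s t} hs => by
          obtain ⟨x, hx, rfl⟩ := hs
          exact ⟨x * embR t, C.mul_mem_right _ _ hx, rfl⟩)
    have hmem : ∀ (C : TwoSidedIdeal (Tri S M R)) (r : R),
        r ∈ projR C ↔ ∃ x ∈ C, x.2.2 = r := fun C r => by
      simp [projR]
    have h := hP.2 (projR A) (projR B) (fun s hs t ht => by
      obtain ⟨x, hx, rfl⟩ := (hmem A s).mp hs
      obtain ⟨y, hy, rfl⟩ := (hmem B t).mp ht
      exact mem_liftR.mp (hAB x hx y hy))
    rcases h with h | h
    · exact Or.inl (fun x hx => mem_liftR.mpr (h ((hmem A x.2.2).mpr ⟨x, hx, rfl⟩)))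
    · exact Or.inr (fun x hx => mem_liftR.mpr (h ((hmem B x.2.2).mpr ⟨x, hx, rfl⟩)))

lemma prime_of_liftS {P : TwoSidedIdeal S}
    (h : IsPrimeTSI (liftS (M := M) (R := R) P)) : IsPrimeTSI P := by
  constructor
  · intro hP
    refine h.1 (TwoSidedIdeal.one_mem_iff _ |>.mp (mem_liftS.mpr ?_))
    rw [hP]; trivial
  · intro I1 J1 hprod
    have h2 := h.2 (liftS I1) (liftS J1) (fun a ha b hb =>
      mem_liftS.mpr (hprod _ (mem_liftS.mp ha) _ (mem_liftS.mp hb)))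
    rcases h2 with hh | hh
    · exact Or.inl fun s hs =>
        mem_liftS.mp (hh (mem_liftS.mpr (show (embS s : Tri S M R).1 ∈ I1 from hs)))
    · exact Or.inr fun s hs =>
        mem_liftS.mp (hh (mem_liftS.mpr (show (embS s : Tri S M R).1 ∈ J1 from hs)))

lemma prime_of_liftR {P : TwoSidedIdeal R}
    (h : IsPrimeTSI (liftR (S := S) (M := M) P)) : IsPrimeTSI P := by
  constructor
  · intro hP
    refine h.1 (TwoSidedIdeal.one_mem_iff _ |>.mp (mem_liftR.mpr ?_))
    rw [hP]; trivial
  · intro I1 J1 hprod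
    have h2 := h.2 (liftR I1) (liftR J1) (fun a ha b hb =>
      mem_liftR.mpr (hprod _ (mem_liftR.mp ha) _ (mem_liftR.mp hb)))
    rcases h2 with hh | hh
    · exact Or.inl fun r hr =>
        mem_liftR.mp (hh (mem_liftR.mpr (show (embR r : Tri S M R).2.2 ∈ I1 from hr)))
    · exact Or.inr fun r hr =>
        mem_liftR.mp (hh (mem_liftR.mpr (show (embR r : Tri S M R).2.2 ∈ J1 from hr)))

/-- Classification of prime ideals of the triangular matrix ring. -/
lemma prime_cases (Q : TwoSidedIdeal (Tri S M R)) (hQ : IsPrimeTSI Q) :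
    (∃ P : TwoSidedIdeal S, IsPrimeTSI P ∧ Q = liftS P) ∨
    (∃ P : TwoSidedIdeal R, IsPrimeTSI P ∧ Q = liftR P) := by
  have h := hQ.2 AT BT (fun a ha b hb => by
    rw [AT_mul_BT (mem_AT.mp ha) (mem_BT.mp hb)]; exact Q.zero_mem)
  rcases h with hA | hB
  · left
    let P1 : TwoSidedIdeal S := TwoSidedIdeal.mk' {s | embS s ∈ Q}
      (by rw [Set.mem_setOf_eq, embS_zero]; exact Q.zero_mem)
      (fun {x y} hx hy => by rw [Set.mem_setOf_eq, embS_add]; exact Q.add_mem hx hy)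
      (fun {x} hx => by rw [Set.mem_setOf_eq, embS_neg]; exact Q.neg_mem hx)
      (fun {x y} hy => by rw [Set.mem_setOf_eq, embS_mul]; exact Q.mul_mem_left _ _ hy)
      (fun {x y} hx => by rw [Set.mem_setOf_eq, embS_mul]; exact Q.mul_mem_right _ _ hx)
    have hm : ∀ s : S, s ∈ P1 ↔ embS (M := M) (R := R) s ∈ Q := fun s => by simp [P1]
    have heq : Q = liftS P1 := by
      refine TwoSidedIdeal.ext fun x => ?_
      rw [mem_liftS, hm]
      constructor
      · intro hx
        rw [← mul_e1 x]
        exact Q.mul_mem_right _ _ hx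
      · intro hx
        rw [tri_decomp x]
        exact Q.add_mem hx (hA (mem_AT.mpr rfl))
    exact ⟨P1, prime_of_liftS (heq ▸ hQ), heq⟩
  · right
    let P1 : TwoSidedIdeal R := TwoSidedIdeal.mk' {r | embR r ∈ Q}
      (by rw [Set.mem_setOf_eq, embR_zero]; exact Q.zero_mem)
      (fun {x y} hx hy => by rw [Set.mem_setOf_eq, embR_add]; exact Q.add_mem hx hy)
      (fun {x} hx => by rw [Set.mem_setOf_eq, embR_neg]; exact Q.neg_mem hx)
      (fun {x y} hy => by rw [Set.mem_setOf_eq, embR_mul]; exact Q.mul_mem_left _ _ hy)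
      (fun {x y} hx => by rw [Set.mem_setOf_eq, embR_mul]; exact Q.mul_mem_right _ _ hx)
    have hm : ∀ r : R, r ∈ P1 ↔ embR (S := S) (M := M) r ∈ Q := fun r => by simp [P1]
    have heq : Q = liftR P1 := by
      refine TwoSidedIdeal.ext fun x => ?_
      rw [mem_liftR, hm]
      constructor
      · intro hx
        rw [← e3_mul x]
        exact Q.mul_mem_left _ _ hx
      · intro hx
        rw [tri_decomp' x]
        exact Q.add_mem hx (hB (mem_BT.mpr rfl))
    exact ⟨P1, prime_of_liftR (heq ▸ hQ), heq⟩

lemma liftS_le_iff {P P' : TwoSidedIdeal S} :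
    liftS (M := M) (R := R) P ≤ liftS P' ↔ P ≤ P' := by
  constructor
  · intro h s hs
    exact mem_liftS.mp (h (mem_liftS.mpr (show (embS s : Tri S M R).1 ∈ P from hs)))
  · intro h x hx
    exact mem_liftS.mpr (h (mem_liftS.mp hx))

lemma liftR_le_iff {P P' : TwoSidedIdeal R} :
    liftR (S := S) (M := M) P ≤ liftR P' ↔ P ≤ P' := by
  constructor
  · intro h r hr
    exact mem_liftR.mp (h (mem_liftR.mpr (show (embR r : Tri S M R).2.2 ∈ P from hr)))
  · intro h x hx
    exact mem_liftR.mpr (h (mem_liftR.mp hx))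

lemma liftS_minPrime {P : TwoSidedIdeal S} (hP : IsMinPrime P) :
    IsMinPrime (liftS (M := M) (R := R) P) := by
  refine ⟨liftS_prime hP.1, fun Q hQ hle => ?_⟩
  rcases prime_cases Q hQ with ⟨P', hP', rfl⟩ | ⟨P', hP', rfl⟩
  · rw [hP.2 P' hP' (liftS_le_iff.mp hle)]
  · exfalso
    have h1 : (embS 1 : Tri S M R) ∈ liftR P' := mem_liftR.mpr P'.zero_mem
    exact hP.1.1 (P.one_mem_iff.mp (mem_liftS.mp (hle h1)))

lemma liftR_minPrime {P : TwoSidedIdeal R} (hP : IsMinPrime P) :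
    IsMinPrime (liftR (S := S) (M := M) P) := by
  refine ⟨liftR_prime hP.1, fun Q hQ hle => ?_⟩
  rcases prime_cases Q hQ with ⟨P', hP', rfl⟩ | ⟨P', hP', rfl⟩
  · exfalso
    have h1 : (embR 1 : Tri S M R) ∈ liftS P' := mem_liftS.mpr P'.zero_mem
    exact hP.1.1 (P.one_mem_iff.mp (mem_liftR.mp (hle h1)))
  · rw [hP.2 P' hP' (liftR_le_iff.mp hle)]

lemma minPrime_cases (Q : TwoSidedIdeal (Tri S M R)) (hQ : IsMinPrime Q) :
    (∃ P : TwoSidedIdeal S, IsMinPrime P ∧ Q = liftS P) ∨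
    (∃ P : TwoSidedIdeal R, IsMinPrime P ∧ Q = liftR P) := by
  rcases prime_cases Q hQ.1 with ⟨P, hP, rfl⟩ | ⟨P, hP, rfl⟩
  · left
    refine ⟨P, ⟨hP, fun P' hP' hle => ?_⟩, rfl⟩
    have hQ' := hQ.2 (liftS P') (liftS_prime hP') (liftS_le_iff.mpr hle)
    refine TwoSidedIdeal.ext fun s => ?_
    have h3 : (embS s : Tri S M R) ∈ liftS P' ↔ (embS s : Tri S M R) ∈ liftS P := by
      rw [hQ']
    simpa only [mem_liftS, embS_fst] using h3
  · right
    refine ⟨P, ⟨hP, fun P' hP' hle => ?_⟩, rfl⟩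
    have hQ' := hQ.2 (liftR P') (liftR_prime hP') (liftR_le_iff.mpr hle)
    refine TwoSidedIdeal.ext fun r => ?_
    have h3 : (embR r : Tri S M R) ∈ liftR P' ↔ (embR r : Tri S M R) ∈ liftR P := by
      rw [hQ']
    simpa only [mem_liftR, embR_thd] using h3

lemma mem_Pa_iff {A : Type*} [Ring A] {a x : A} :
    x ∈ Pa a ↔ ∀ P : TwoSidedIdeal A, IsMinPrime P → a ∈ P → x ∈ P := by
  simp only [Pa, Pmin, Set.mem_iInter, Set.mem_setOf_eq, SetLike.mem_coe,
    Set.singleton_subset_iff, and_imp]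

end Aux

/-- Theorem 4.8: an ideal `J = [[I, N], [0, L]]` of the generalized triangular matrix ring
`T = [[S, M], [0, R]]` is a z°-ideal iff `N = M` and `I`, `L` are z°-ideals of `S`, `R`. -/
theorem stmt9 {S M R : Type*} [Ring S] [Ring R] [AddCommGroup M]
    [Module S M] [Module Rᵐᵒᵖ M] [SMulCommClass S Rᵐᵒᵖ M]
    (I : TwoSidedIdeal S) (L : TwoSidedIdeal R) (N : Set M)
    (hN0 : (0 : M) ∈ N) (hNadd : ∀ m ∈ N, ∀ m' ∈ N, m + m' ∈ N)
    (hNsmulS : ∀ s : S, ∀ m ∈ N, s • m ∈ N)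
    (hNsmulR : ∀ r : R, ∀ m ∈ N, op r • m ∈ N)
    (hIM : ∀ s ∈ I, ∀ m : M, s • m ∈ N)
    (hML : ∀ m : M, ∀ r ∈ L, op r • m ∈ N)
    (J : TwoSidedIdeal (Tri S M R))
    (hJ : (J : Set (Tri S M R)) = {x : Tri S M R | x.1 ∈ I ∧ x.2.1 ∈ N ∧ x.2.2 ∈ L}) :
    IsZoIdeal J ↔ N = Set.univ ∧ IsZoIdeal I ∧ IsZoIdeal L := by
  have hJ' : ∀ x : Tri S M R, x ∈ J ↔ x.1 ∈ I ∧ x.2.1 ∈ N ∧ x.2.2 ∈ L := fun x => by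
    rw [← SetLike.mem_coe, hJ]; exact Iff.rfl
  constructor
  · intro hzo
    have h0J : (0 : Tri S M R) ∈ J := (hJ' 0).mpr ⟨I.zero_mem, hN0, L.zero_mem⟩
    refine ⟨?_, ?_, ?_⟩
    · apply Set.eq_univ_of_forall
      intro m
      have hm : ((0 : S), m, (0 : R)) ∈ Pa (0 : Tri S M R) :=
        mem_Pa_iff.mpr fun P hP _ => mid_mem_prime hP.1 m
      exact ((hJ' _).mp (hzo 0 h0J hm)).2.1
    · intro a ha b hb
      have haJ : (embS a : Tri S M R) ∈ J := (hJ' _).mpr ⟨ha, hN0, L.zero_mem⟩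
      have hbP : (embS b : Tri S M R) ∈ Pa (embS a : Tri S M R) := by
        refine mem_Pa_iff.mpr fun Q hQ haQ => ?_
        rcases minPrime_cases Q hQ with ⟨P, hP, rfl⟩ | ⟨P, hP, rfl⟩
        · exact mem_liftS.mpr (mem_Pa_iff.mp hb P hP (mem_liftS.mp haQ))
        · exact mem_liftR.mpr P.zero_mem
      exact ((hJ' _).mp (hzo _ haJ hbP)).1
    · intro a ha b hb
      have haJ : (embR a : Tri S M R) ∈ J := (hJ' _).mpr ⟨I.zero_mem, hN0, ha⟩
      have hbP : (embR b : Tri S M R) ∈ Pa (embR a : Tri S M R) := by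
        refine mem_Pa_iff.mpr fun Q hQ haQ => ?_
        rcases minPrime_cases Q hQ with ⟨P, hP, rfl⟩ | ⟨P, hP, rfl⟩
        · exact mem_liftS.mpr P.zero_mem
        · exact mem_liftR.mpr (mem_Pa_iff.mp hb P hP (mem_liftR.mp haQ))
      exact ((hJ' _).mp (hzo _ haJ hbP)).2.2
  · rintro ⟨hNu, hI, hL⟩ x hx y hy
    rw [hJ]
    obtain ⟨hx1, -, hx3⟩ := (hJ' x).mp hx
    refine ⟨?_, by rw [hNu]; trivial, ?_⟩
    · exact hI x.1 hx1 (mem_Pa_iff.mpr fun P hP hxP =>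
        mem_liftS.mp (mem_Pa_iff.mp hy (liftS P) (liftS_minPrime hP) (mem_liftS.mpr hxP)))
    · exact hL x.2.2 hx3 (mem_Pa_iff.mpr fun P hP hxP =>
        mem_liftR.mp (mem_Pa_iff.mp hy (liftR P) (liftR_minPrime hP) (mem_liftR.mpr hxP)))
end

section
/- Let R be a semiprime ring, let {I_α : α ∈ S} be a family of ideals of R, and let J be a right annihilator ideal of R. Then J ∩ r(l(∑_{α∈S} I_α)) = r(l(∑_{α∈S} (I_α ∩ J))). -/
open TwoSidedIdeal

/-!
Write `A = ∑ I_α` and `B = ∑ (I_α ∩ J)`. Since `B ⊆ J`, `B ⊆ A` and `J = r(l(J))`, monotonicity of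
`r ∘ l` gives `r(l(B)) ⊆ J ∩ r(l(A))`. Conversely `J A ⊆ B`, so for `y ∈ l(B)` and `j ∈ J` we get
`y j ∈ l(A)`. If moreover `x ∈ J ∩ r(l(A))`, then `x r y ∈ J` for every `r`, hence
`(y x) r (y x) = (y (x r y)) x = 0`, and semiprimeness forces `y x = 0`.
-/

lemma rAnn_lAnn_mono {R : Type*} [Ring R] {S T : Set R} (h : S ⊆ T) :
    rAnn R (lAnn R S) ⊆ rAnn R (lAnn R T) :=
  fun _ hx y hy ↦ hx y fun s hs ↦ hy s (h hs)

namespace TwoSidedIdeal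

variable {R : Type*} [Ring R]

lemma mul_eq_zero_of_mem_span_singleton {x y a b : R} (h : ∀ r, x * r * y = 0)
    (ha : a ∈ span {x}) (hb : b ∈ span {y}) : a * b = 0 := by
  have hxb : ∀ b ∈ span {y}, ∀ r, x * r * b = 0 := fun b hb ↦ by
    induction hb using span_induction with
    | mem b hb => rwa [Set.mem_singleton_iff.mp hb]
    | zero => simp
    | add b c _ _ hb hc => simp [mul_add, hb, hc]
    | neg b _ hb => simp [hb]
    | left_absorb s b _ hb => exact fun r ↦ by rw [← mul_assoc, mul_assoc x, hb]
    | right_absorb s b _ hb => exact fun r ↦ by rw [← mul_assoc, hb, zero_mul]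
  induction ha using span_induction generalizing b with
  | mem a ha => rw [Set.mem_singleton_iff.mp ha, ← mul_one x, hxb b hb]
  | zero => simp
  | add a c _ _ ha hc => rw [add_mul, ha hb, hc hb, add_zero]
  | neg a _ ha => rw [neg_mul, ha hb, neg_zero]
  | left_absorb s a _ ha => rw [mul_assoc, ha hb, mul_zero]
  | right_absorb s a _ ha => rw [mul_assoc, ha (mul_mem_left _ s b hb)]

def colon (J B : TwoSidedIdeal R) : TwoSidedIdeal R :=
  .mk' {a | ∀ j ∈ J, j * a ∈ B}
    (fun j _ ↦ by simp)
    (fun ha hb j hj ↦ by rw [mul_add]; exact B.add_mem (ha j hj) (hb j hj))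
    (fun ha j hj ↦ by rw [mul_neg]; exact B.neg_mem (ha j hj))
    (fun {r _} ha j hj ↦ by rw [← mul_assoc]; exact ha _ (J.mul_mem_right _ r hj))
    (fun {_ r} ha j hj ↦ by rw [← mul_assoc]; exact B.mul_mem_right _ r (ha j hj))

lemma mem_colon {J B : TwoSidedIdeal R} {a : R} : a ∈ J.colon B ↔ ∀ j ∈ J, j * a ∈ B :=
  mem_mk' ..

lemma mul_mem_iSup_inf {ι : Type*} {I : ι → TwoSidedIdeal R} {J : TwoSidedIdeal R} {j a : R}
    (hj : j ∈ J) (ha : a ∈ ⨆ α, I α) : j * a ∈ ⨆ α, (I α ⊓ J) := by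
  have hle : (⨆ α, I α) ≤ J.colon (⨆ α, (I α ⊓ J)) := iSup_le fun α b hb ↦
    mem_colon.mpr fun j hj ↦ le_iSup (fun α ↦ I α ⊓ J) α
      ⟨(I α).mul_mem_left j b hb, J.mul_mem_right j b hj⟩
  exact mem_colon.mp (hle ha) j hj

end TwoSidedIdeal

lemma IsSemiprimeRing.eq_zero_of_mul_mul_eq_zero {R : Type*} [Ring R] (hR : IsSemiprimeRing R)
    {z : R} (h : ∀ r, z * r * z = 0) : z = 0 := by
  have hz : z ∈ TwoSidedIdeal.span {z} := TwoSidedIdeal.subset_span rfl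
  rwa [hR _ fun _ ha _ hb ↦ TwoSidedIdeal.mul_eq_zero_of_mem_span_singleton h ha hb,
    TwoSidedIdeal.mem_bot] at hz

lemma mul_mem_lAnn_iSup {R : Type*} [Ring R] {ι : Type*} {I : ι → TwoSidedIdeal R}
    {J : TwoSidedIdeal R} {y j : R}
    (hy : y ∈ lAnn R ((⨆ α, (I α ⊓ J) : TwoSidedIdeal R) : Set R)) (hj : j ∈ J) :
    y * j ∈ lAnn R ((⨆ α, I α : TwoSidedIdeal R) : Set R) := fun a ha ↦ by
  rw [mul_assoc]
  exact hy _ (TwoSidedIdeal.mul_mem_iSup_inf hj ha)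

/-- Lemma 5.2: in a semiprime ring, for any family `{I_α}` of ideals and any right
annihilator ideal `J`, `J ∩ r(l(∑_α I_α)) = r(l(∑_α (I_α ∩ J)))`. -/
theorem stmt12 (R : Type*) [Ring R] (hR : IsSemiprimeRing R)
    {ι : Type*} (I : ι → TwoSidedIdeal R) (J : TwoSidedIdeal R)
    (hJ : IsRightAnnIdeal J) :
    (J : Set R) ∩ rAnn R (lAnn R ((⨆ α, I α : TwoSidedIdeal R) : Set R)) =
      rAnn R (lAnn R ((⨆ α, (I α ⊓ J) : TwoSidedIdeal R) : Set R)) := by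
  have hBJ : (⨆ α, (I α ⊓ J)) ≤ J := iSup_le fun α ↦ inf_le_right
  have hBA : (⨆ α, (I α ⊓ J)) ≤ ⨆ α, I α := iSup_mono fun α ↦ inf_le_left
  refine subset_antisymm ?_ fun x hx ↦
    ⟨(Set.ext_iff.mp hJ x).mpr (rAnn_lAnn_mono hBJ hx), rAnn_lAnn_mono hBA hx⟩
  rintro x ⟨hxJ, hxA⟩ y hy
  refine hR.eq_zero_of_mul_mul_eq_zero fun r ↦ ?_
  calc y * x * r * (y * x) = y * (x * (r * y)) * x := by noncomm_ring
    _ = 0 := hxA _ (mul_mem_lAnn_iSup hy (J.mul_mem_right x _ hxJ))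
end
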